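/- Let 𝒦, Q, S, W, A be random variables such that: (i) I(Q ; 𝒦) = 0; (ii) I(S ; (𝒦, Q)) = 0; (iii) H(A | Q, S) = 0; and (iv) H(W | S) = 0. Then I((Q, A, S, W) ; 𝒦) = 0; in particular, for any two possible realizations of the retrieval index, the joint distributions of (queries, answers, storage, messages) coincide. -/

import Mathlib

open scoped BigOperators Classical

noncomputable section

namespace SDMM

variable {Ω : Type} [Fintype Ω]

/-- The probability that the random variable `X` (on finite sample space `Ω`
with probability mass function `p`) takes the value `a`. -/
def distOf (p : Ω → ℝ) {α : Type*} (X : Ω → α) (a : α) : ℝ :=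
  ∑ ω, if X ω = a then p ω else 0

/-- `p` is a probability mass function on `Ω`. -/
def IsPMF (p : Ω → ℝ) : Prop := (∀ ω, 0 ≤ p ω) ∧ ∑ ω, p ω = 1

/-- Shannon entropy (natural-log units) of the random variable `X`. -/
def H (p : Ω → ℝ) {α : Type*} [Fintype α] (X : Ω → α) : ℝ :=
  ∑ a, Real.negMulLog (distOf p X a)

/-- Conditional Shannon entropy `H(X | Y) = H(X, Y) - H(Y)`. -/
def Hc (p : Ω → ℝ) {α β : Type*} [Fintype α] [Fintype β] (X : Ω → α) (Y : Ω → β) : ℝ :=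
  H p (fun ω => (X ω, Y ω)) - H p Y

/-- Mutual information `I(X ; Y) = H(X) + H(Y) - H(X, Y)`. -/
def MI (p : Ω → ℝ) {α β : Type*} [Fintype α] [Fintype β] (X : Ω → α) (Y : Ω → β) : ℝ :=
  H p X + H p Y - H p (fun ω => (X ω, Y ω))

/-- Conditional mutual information `I(X ; Y | Z)`. -/
def CMI (p : Ω → ℝ) {α β γ : Type*} [Fintype α] [Fintype β] [Fintype γ]
    (X : Ω → α) (Y : Ω → β) (Z : Ω → γ) : ℝ :=
  H p (fun ω => (X ω, Z ω)) + H p (fun ω => (Y ω, Z ω))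
    - H p (fun ω => (X ω, Y ω, Z ω)) - H p Z

/-- `X` is uniformly distributed on `α`. -/
def Uniform (p : Ω → ℝ) {α : Type*} [Fintype α] (X : Ω → α) : Prop :=
  ∀ a, distOf p X a = 1 / Fintype.card α

/-- `X` and `Y` are independent random variables. -/
def IndepRV (p : Ω → ℝ) {α β : Type*} (X : Ω → α) (Y : Ω → β) : Prop :=
  ∀ a b, distOf p (fun ω => (X ω, Y ω)) (a, b) = distOf p X a * distOf p Y b

end SDMM

namespace SDMMAux

set_option linter.unusedSectionVars false

open SDMM Real

variable {Ω : Type} [Fintype Ω] {α β : Type} [Fintype α] [Fintype β]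

lemma distOf_nonneg (p : Ω → ℝ) (h0 : ∀ ω, 0 ≤ p ω) (X : Ω → α) (a : α) :
    0 ≤ distOf p X a := by
  unfold SDMM.distOf
  refine Finset.sum_nonneg fun ω _ => ?_
  split_ifs with h
  · exact h0 ω
  · exact le_rfl

lemma single_le_distOf (p : Ω → ℝ) (h0 : ∀ ω, 0 ≤ p ω) (X : Ω → α) (ω0 : Ω) :
    p ω0 ≤ distOf p X (X ω0) := by
  unfold SDMM.distOf
  have := Finset.single_le_sum (f := fun ω => if X ω = X ω0 then p ω else 0)
    (fun ω _ => by split_ifs with h; exacts [h0 ω, le_rfl]) (Finset.mem_univ ω0)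
  simpa using this

lemma sum_distOf (p : Ω → ℝ) (hp : IsPMF p) (X : Ω → α) :
    ∑ a, distOf p X a = 1 := by
  unfold SDMM.distOf
  rw [Finset.sum_comm]
  simp only [Finset.sum_ite_eq, Finset.mem_univ, if_true]
  exact hp.2

lemma distOf_fst (p : Ω → ℝ) (X : Ω → α) (Y : Ω → β) (a : α) :
    distOf p X a = ∑ b, distOf p (fun ω => (X ω, Y ω)) (a, b) := by
  unfold SDMM.distOf
  rw [Finset.sum_comm]
  refine Finset.sum_congr rfl fun ω _ => ?_
  by_cases h : X ω = a <;> simp [h, Prod.ext_iff, Finset.sum_ite_eq]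

lemma distOf_snd (p : Ω → ℝ) (X : Ω → α) (Y : Ω → β) (b : β) :
    distOf p Y b = ∑ a, distOf p (fun ω => (X ω, Y ω)) (a, b) := by
  unfold SDMM.distOf
  rw [Finset.sum_comm]
  refine Finset.sum_congr rfl fun ω _ => ?_
  by_cases h : Y ω = b <;> simp [h, Prod.ext_iff, Finset.sum_ite_eq]

lemma distOf_congr {α β : Type*} (p : Ω → ℝ) (X : Ω → α) (Y : Ω → β) (a : α) (b : β)
    (h : ∀ ω, p ω ≠ 0 → (X ω = a ↔ Y ω = b)) :
    distOf p X a = distOf p Y b := by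
  unfold SDMM.distOf
  refine Finset.sum_congr rfl fun ω _ => ?_
  by_cases hω : p ω = 0
  · simp [hω]
  · exact if_congr (h ω hω) rfl rfl

lemma distOf_eq_zero {α : Type*} (p : Ω → ℝ) (X : Ω → α) (a : α)
    (h : ∀ ω, p ω ≠ 0 → X ω ≠ a) : distOf p X a = 0 := by
  unfold SDMM.distOf
  refine Finset.sum_eq_zero fun ω _ => ?_
  by_cases hω : p ω = 0
  · simp [hω]
  · simp [h ω hω]


lemma superadd {ι : Type*} [Fintype ι] (x : ι → ℝ) (hx : ∀ i, 0 ≤ x i) :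
    negMulLog (∑ i, x i) ≤ ∑ i, negMulLog (x i) ∧
      ((∑ i, negMulLog (x i)) = negMulLog (∑ i, x i) →
        ∀ i, x i ≠ 0 → x i = ∑ j, x j) := by
  set T := ∑ j, x j with hT
  have hTnn : 0 ≤ T := Finset.sum_nonneg fun i _ => hx i
  have hle : ∀ i, x i ≤ T := fun i =>
    Finset.single_le_sum (fun j _ => hx j) (Finset.mem_univ i)
  have hterm : ∀ i, 0 ≤ x i * (Real.log T - Real.log (x i)) := by
    intro i
    rcases eq_or_lt_of_le (hx i) with h0 | h0
    · simp [← h0]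
    · have : Real.log (x i) ≤ Real.log T := Real.log_le_log h0 (hle i)
      nlinarith
  have hsum : ∑ i, x i * (Real.log T - Real.log (x i))
      = (∑ i, negMulLog (x i)) - negMulLog T := by
    have h1 : ∀ i, x i * (Real.log T - Real.log (x i))
        = x i * Real.log T + negMulLog (x i) := by
      intro i; simp [negMulLog]; ring
    rw [Finset.sum_congr rfl fun i _ => h1 i, Finset.sum_add_distrib,
      ← Finset.sum_mul, ← hT]
    simp [negMulLog]; ring
  constructor
  · have : 0 ≤ ∑ i, x i * (Real.log T - Real.log (x i)) :=
      Finset.sum_nonneg fun i _ => hterm i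
    rw [hsum] at this; linarith
  · intro heq i hi
    have hz : ∑ i, x i * (Real.log T - Real.log (x i)) = 0 := by
      rw [hsum, heq]; ring
    have hall := (Finset.sum_eq_zero_iff_of_nonneg fun i _ => hterm i).mp hz
    have hi0 : 0 < x i := lt_of_le_of_ne (hx i) (Ne.symm hi)
    have := hall i (Finset.mem_univ i)
    have hlog : Real.log T = Real.log (x i) := by
      rcases mul_eq_zero.mp this with h | h
      · exact absurd h hi
      · linarith
    have hTpos : 0 < T := lt_of_lt_of_le hi0 (hle i)
    have := Real.exp_log hTpos
    rw [hlog, Real.exp_log hi0] at this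
    linarith

lemma det_of_Hc_eq_zero (p : Ω → ℝ) (hp : IsPMF p)
    (X : Ω → α) (Y : Ω → β) (h : Hc p X Y = 0) :
    ∀ ω ω', p ω ≠ 0 → p ω' ≠ 0 → Y ω = Y ω' → X ω = X ω' := by
  set P : α → β → ℝ := fun a b => distOf p (fun ω => (X ω, Y ω)) (a, b) with hP
  have hPnn : ∀ a b, 0 ≤ P a b := fun a b => distOf_nonneg p hp.1 _ _
  have hmarg : ∀ b, distOf p Y b = ∑ a, P a b := fun b => distOf_snd p X Y b
  have hHc : Hc p X Y
      = ∑ b, ((∑ a, negMulLog (P a b)) - negMulLog (∑ a, P a b)) := by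
    unfold SDMM.Hc SDMM.H
    rw [Fintype.sum_prod_type, Finset.sum_comm, ← Finset.sum_sub_distrib]
    exact Finset.sum_congr rfl fun b _ => by rw [hmarg b]
  have hnn : ∀ b, 0 ≤ (∑ a, negMulLog (P a b)) - negMulLog (∑ a, P a b) := by
    intro b
    have := (superadd (fun a => P a b) (fun a => hPnn a b)).1
    linarith
  have hzero : ∀ b, ((∑ a, negMulLog (P a b)) - negMulLog (∑ a, P a b)) = 0 := by
    have : ∑ b, ((∑ a, negMulLog (P a b)) - negMulLog (∑ a, P a b)) = 0 := by
      rw [← hHc]; exact h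
    exact fun b => (Finset.sum_eq_zero_iff_of_nonneg fun b _ => hnn b).mp this b
      (Finset.mem_univ b)
  intro ω ω' hω hω' hY
  by_contra hne
  set b := Y ω with hb
  have hkey := (superadd (fun a => P a b) (fun a => hPnn a b)).2
    (by have := hzero b; linarith)
  have hωP : p ω ≤ P (X ω) b := by
    have := single_le_distOf p hp.1 (fun ω => (X ω, Y ω)) ω
    simpa [hP] using this
  have hω'P : p ω' ≤ P (X ω') b := by
    have := single_le_distOf p hp.1 (fun ω => (X ω, Y ω)) ω'
    simpa [hP, hb, ← hY] using this
  have h1 : 0 < P (X ω) b := lt_of_lt_of_le (lt_of_le_of_ne (hp.1 ω) (Ne.symm hω)) hωP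
  have h2 : 0 < P (X ω') b := lt_of_lt_of_le (lt_of_le_of_ne (hp.1 ω') (Ne.symm hω')) hω'P
  have e1 := hkey (X ω) h1.ne'
  have e2 := hkey (X ω') h2.ne'
  have hpair : P (X ω) b + P (X ω') b ≤ ∑ a, P a b := by
    have hss := Finset.sum_le_sum_of_subset_of_nonneg (f := fun a => P a b)
      (Finset.subset_univ ({X ω, X ω'} : Finset α)) (fun i _ _ => hPnn i b)
    rwa [Finset.sum_pair hne] at hss
  rw [e1, e2] at hpair
  have hTpos : 0 < ∑ a, P a b := by rw [← e1]; exact h1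
  linarith


lemma gibbs_pointwise {P q : ℝ} (hP : 0 ≤ P) (hq : 0 ≤ q) (himp : P ≠ 0 → q ≠ 0) :
    P - q ≤ P * (Real.log P - Real.log q) ∧
      (P * (Real.log P - Real.log q) = P - q → P = q) := by
  rcases eq_or_lt_of_le hP with h0 | h0
  · refine ⟨by rw [← h0]; simpa using hq, fun he => ?_⟩
    rw [← h0] at he ⊢
    simp at he
    linarith
  · have hq0 : 0 < q := lt_of_le_of_ne hq (Ne.symm (himp h0.ne'))
    have hx : 0 < q / P := div_pos hq0 h0
    have hlogdiv : Real.log (q / P) = Real.log q - Real.log P :=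
      Real.log_div hq0.ne' h0.ne'
    have hPq : P * (q / P) = q := by field_simp
    constructor
    · have hlog : Real.log (q / P) ≤ q / P - 1 := Real.log_le_sub_one_of_pos hx
      have hm := mul_le_mul_of_nonneg_left hlog h0.le
      rw [hlogdiv] at hm
      nlinarith
    · intro he
      by_contra hne
      have hne1 : q / P ≠ 1 := by
        intro h1
        rw [div_eq_one_iff_eq h0.ne'] at h1
        exact hne h1.symm
      have hs : Real.log (q / P) < q / P - 1 := Real.log_lt_sub_one_of_pos hx hne1
      have hm := mul_lt_mul_of_pos_left hs h0
      rw [hlogdiv] at hm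
      nlinarith

lemma negMulLog_eq_sum {ι : Type*} [Fintype ι] (f : ι → ℝ) (u : ℝ)
    (hu : u = ∑ i, f i) :
    negMulLog u = ∑ i, -(f i * Real.log u) := by
  calc negMulLog u = -(∑ i, f i) * Real.log u := by rw [negMulLog, ← hu]
    _ = ∑ i, -(f i * Real.log u) := by
        rw [neg_mul, Finset.sum_mul, ← Finset.sum_neg_distrib]

lemma MI_eq_sum (p : Ω → ℝ) (X : Ω → α) (Y : Ω → β) :
    MI p X Y = ∑ c : α × β,
      distOf p (fun ω => (X ω, Y ω)) c *
        (Real.log (distOf p (fun ω => (X ω, Y ω)) c)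
          - Real.log (distOf p X c.1) - Real.log (distOf p Y c.2)) := by
  set P : α × β → ℝ := fun c => distOf p (fun ω => (X ω, Y ω)) c with hPdef
  have h1 : H p X = ∑ c : α × β, -(P c * Real.log (distOf p X c.1)) := by
    unfold SDMM.H
    rw [Fintype.sum_prod_type]
    exact Finset.sum_congr rfl fun a _ =>
      negMulLog_eq_sum (fun b => P (a, b)) _ (distOf_fst p X Y a)
  have h2 : H p Y = ∑ c : α × β, -(P c * Real.log (distOf p Y c.2)) := by
    unfold SDMM.H
    rw [Fintype.sum_prod_type, Finset.sum_comm]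
    exact Finset.sum_congr rfl fun b _ =>
      negMulLog_eq_sum (fun a => P (a, b)) _ (distOf_snd p X Y b)
  have h3 : H p (fun ω => (X ω, Y ω)) = ∑ c : α × β, -(P c * Real.log (P c)) := by
    unfold SDMM.H
    exact Finset.sum_congr rfl fun c _ => by simp [negMulLog, hPdef]
  unfold SDMM.MI
  rw [h1, h2, h3, ← Finset.sum_add_distrib, ← Finset.sum_sub_distrib]
  exact Finset.sum_congr rfl fun c _ => by ring

lemma indep_of_MI_eq_zero (p : Ω → ℝ) (hp : IsPMF p)
    (X : Ω → α) (Y : Ω → β) (h : MI p X Y = 0) : IndepRV p X Y := by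
  set P : α × β → ℝ := fun c => distOf p (fun ω => (X ω, Y ω)) c with hPdef
  set u : α → ℝ := fun a => distOf p X a with hu
  set v : β → ℝ := fun b => distOf p Y b with hv
  have hPnn : ∀ c, 0 ≤ P c := fun c => distOf_nonneg p hp.1 _ _
  have hunn : ∀ a, 0 ≤ u a := fun a => distOf_nonneg p hp.1 _ _
  have hvnn : ∀ b, 0 ≤ v b := fun b => distOf_nonneg p hp.1 _ _
  have huP : ∀ c : α × β, P c ≤ u c.1 := by
    rintro ⟨a, b⟩
    show distOf p (fun ω => (X ω, Y ω)) (a, b) ≤ distOf p X a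
    rw [distOf_fst p X Y a]
    exact Finset.single_le_sum (f := fun b => P (a, b))
      (fun b _ => hPnn (a, b)) (Finset.mem_univ b)
  have hvP : ∀ c : α × β, P c ≤ v c.2 := by
    rintro ⟨a, b⟩
    show distOf p (fun ω => (X ω, Y ω)) (a, b) ≤ distOf p Y b
    rw [distOf_snd p X Y b]
    exact Finset.single_le_sum (f := fun a => P (a, b))
      (fun a _ => hPnn (a, b)) (Finset.mem_univ a)
  have hsumP : ∑ c : α × β, P c = 1 := sum_distOf p hp _
  have hsumuv : ∑ c : α × β, u c.1 * v c.2 = 1 := by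
    rw [Fintype.sum_prod_type]
    simp only [← Finset.mul_sum]
    rw [← Finset.sum_mul, sum_distOf p hp X, sum_distOf p hp Y, one_mul]
  -- pointwise facts
  have key : ∀ c : α × β,
      P c - u c.1 * v c.2 ≤
        P c * (Real.log (P c) - Real.log (u c.1) - Real.log (v c.2)) ∧
      (P c * (Real.log (P c) - Real.log (u c.1) - Real.log (v c.2))
          = P c - u c.1 * v c.2 → P c = u c.1 * v c.2) := by
    intro c
    by_cases hc : P c = 0
    · have hg := gibbs_pointwise (P := P c) (q := u c.1 * v c.2) (hPnn c)
        (mul_nonneg (hunn c.1) (hvnn c.2)) (fun hne => absurd hc hne)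
      rw [hc] at hg ⊢
      simpa using hg
    · have hPpos : 0 < P c := lt_of_le_of_ne (hPnn c) (Ne.symm hc)
      have hupos : 0 < u c.1 := lt_of_lt_of_le hPpos (huP c)
      have hvpos : 0 < v c.2 := lt_of_lt_of_le hPpos (hvP c)
      have hlm : Real.log (u c.1 * v c.2) = Real.log (u c.1) + Real.log (v c.2) :=
        Real.log_mul hupos.ne' hvpos.ne'
      have hg := gibbs_pointwise (P := P c) (q := u c.1 * v c.2) (hPnn c)
        (mul_nonneg (hunn c.1) (hvnn c.2))
        (fun _ => (mul_pos hupos hvpos).ne')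
      rw [hlm] at hg
      constructor
      · have := hg.1; linarith [hg.1]
      · intro he
        exact hg.2 (by linarith)
  have hsums : ∑ c : α × β, (P c - u c.1 * v c.2)
      = ∑ c : α × β, P c * (Real.log (P c) - Real.log (u c.1) - Real.log (v c.2)) := by
    rw [Finset.sum_sub_distrib, hsumP, hsumuv, ← MI_eq_sum p X Y, h]
    ring
  have heach := (Finset.sum_eq_sum_iff_of_le fun c _ => (key c).1).mp hsums
  intro a b
  have := (key (a, b)).2 ((heach (a, b) (Finset.mem_univ _)).symm)
  exact this

lemma MI_eq_zero_of_indep (p : Ω → ℝ) (hp : IsPMF p)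
    (X : Ω → α) (Y : Ω → β) (h : IndepRV p X Y) : MI p X Y = 0 := by
  have hXY : H p (fun ω => (X ω, Y ω)) = H p X + H p Y := by
    unfold SDMM.H
    rw [Fintype.sum_prod_type]
    have : ∀ a b, negMulLog (distOf p (fun ω => (X ω, Y ω)) (a, b))
        = distOf p Y b * negMulLog (distOf p X a)
          + distOf p X a * negMulLog (distOf p Y b) := by
      intro a b; rw [h a b, negMulLog_mul]
    simp only [this, Finset.sum_add_distrib, ← Finset.mul_sum, ← Finset.sum_mul,
      sum_distOf p hp X, sum_distOf p hp Y]
    ring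
  unfold SDMM.MI
  rw [hXY]
  ring

end SDMMAux

/-- **Lemma 8 of MM-XSTPIR (privacy of the full transcript).**
If the queries `Q` are independent of the retrieval index `𝒦`, the storage `S`
is independent of `(𝒦, Q)`, the answers `A` are a function of `(Q, S)`, and the
messages `W` are a function of `S`, then `I((Q, A, S, W) ; 𝒦) = 0`; in
particular, the conditional distribution of `(Q, A, S, W)` given `𝒦 = k` is the
same for all realizations `k` of the retrieval index. -/
theorem transcript_independent_of_index
    (Ω : Type) [Fintype Ω] (p : Ω → ℝ) (hp : SDMM.IsPMF p)
    {αK αQ αS αW αA : Type} [Fintype αK] [Fintype αQ] [Fintype αS]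
    [Fintype αW] [Fintype αA]
    (𝒦 : Ω → αK) (Q : Ω → αQ) (S : Ω → αS) (W : Ω → αW) (A : Ω → αA)
    (hQ : SDMM.MI p Q 𝒦 = 0)
    (hS : SDMM.MI p S (fun ω => (𝒦 ω, Q ω)) = 0)
    (hA : SDMM.Hc p A (fun ω => (Q ω, S ω)) = 0)
    (hW : SDMM.Hc p W S = 0) :
    SDMM.MI p (fun ω => (Q ω, A ω, S ω, W ω)) 𝒦 = 0 ∧
      ∀ (k k' : αK) (t : αQ × αA × αS × αW),
        SDMM.distOf p 𝒦 k *
            SDMM.distOf p (fun ω => ((Q ω, A ω, S ω, W ω), 𝒦 ω)) (t, k') =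
          SDMM.distOf p 𝒦 k' *
            SDMM.distOf p (fun ω => ((Q ω, A ω, S ω, W ω), 𝒦 ω)) (t, k) := by
  classical
  open SDMM SDMMAux in
  have hQind : SDMM.IndepRV p Q 𝒦 := SDMMAux.indep_of_MI_eq_zero p hp Q 𝒦 hQ
  have hSind : SDMM.IndepRV p S (fun ω => (𝒦 ω, Q ω)) :=
    SDMMAux.indep_of_MI_eq_zero p hp _ _ hS
  have detA := SDMMAux.det_of_Hc_eq_zero p hp A (fun ω => (Q ω, S ω)) hA
  have detW := SDMMAux.det_of_Hc_eq_zero p hp W S hW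
  -- factorization of the (Q, S, 𝒦) distribution
  have hQSK : ∀ (q : αQ) (s : αS) (k : αK),
      SDMM.distOf p (fun ω => ((Q ω, S ω), 𝒦 ω)) ((q, s), k)
        = SDMM.distOf p (fun ω => (Q ω, S ω)) (q, s) * SDMM.distOf p 𝒦 k := by
    intro q s k
    have eKQ : ∀ k : αK, SDMM.distOf p (fun ω => (𝒦 ω, Q ω)) (k, q)
        = SDMM.distOf p 𝒦 k * SDMM.distOf p Q q := by
      intro k
      have eswap : SDMM.distOf p (fun ω => (𝒦 ω, Q ω)) (k, q)
          = SDMM.distOf p (fun ω => (Q ω, 𝒦 ω)) (q, k) :=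
        SDMMAux.distOf_congr p _ _ _ _
          (fun ω _ => by simp only [Prod.mk.injEq]; tauto)
      rw [eswap, hQind q k]; ring
    have eSKQ : ∀ k : αK, SDMM.distOf p (fun ω => ((Q ω, S ω), 𝒦 ω)) ((q, s), k)
        = SDMM.distOf p S s * (SDMM.distOf p 𝒦 k * SDMM.distOf p Q q) := by
      intro k
      have e0 : SDMM.distOf p (fun ω => ((Q ω, S ω), 𝒦 ω)) ((q, s), k)
          = SDMM.distOf p (fun ω => (S ω, (𝒦 ω, Q ω))) (s, (k, q)) :=
        SDMMAux.distOf_congr p _ _ _ _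
          (fun ω _ => by simp only [Prod.mk.injEq]; tauto)
      rw [e0, hSind s (k, q), eKQ k]
    have emarg : SDMM.distOf p (fun ω => (Q ω, S ω)) (q, s)
        = ∑ k : αK, SDMM.distOf p (fun ω => ((Q ω, S ω), 𝒦 ω)) ((q, s), k) :=
      SDMMAux.distOf_fst p (fun ω => (Q ω, S ω)) 𝒦 (q, s)
    have emarg' : SDMM.distOf p (fun ω => (Q ω, S ω)) (q, s)
        = SDMM.distOf p S s * SDMM.distOf p Q q := by
      rw [emarg]
      simp only [eSKQ]
      rw [show ∀ f : αK → ℝ, ∑ k, SDMM.distOf p S s * (f k * SDMM.distOf p Q q)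
          = SDMM.distOf p S s * (∑ k, f k) * SDMM.distOf p Q q from
        fun f => by rw [Finset.mul_sum, Finset.sum_mul]; exact Finset.sum_congr rfl fun k _ => by ring]
      rw [SDMMAux.sum_distOf p hp 𝒦]
      ring
    rw [eSKQ k, emarg']
    ring
  -- factorization of the full transcript distribution
  have hfact : ∀ (t : αQ × αA × αS × αW) (k : αK),
      SDMM.distOf p (fun ω => ((Q ω, A ω, S ω, W ω), 𝒦 ω)) (t, k)
        = SDMM.distOf p (fun ω => (Q ω, A ω, S ω, W ω)) t * SDMM.distOf p 𝒦 k := by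
    rintro ⟨q, a, s, w⟩ k
    by_cases hex : ∃ ω0, p ω0 ≠ 0 ∧ Q ω0 = q ∧ S ω0 = s ∧ A ω0 = a ∧ W ω0 = w
    · obtain ⟨ω0, h0, hq0, hs0, ha0, hw0⟩ := hex
      have key : ∀ ω, p ω ≠ 0 →
          ((Q ω, A ω, S ω, W ω) = (q, a, s, w) ↔ (Q ω, S ω) = (q, s)) := by
        intro ω hω
        simp only [Prod.mk.injEq]
        constructor
        · tauto
        · rintro ⟨h1, h2⟩
          refine ⟨h1, ?_, h2, ?_⟩
          · exact (detA ω ω0 hω h0 (by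
              simp only [Prod.mk.injEq]
              exact ⟨h1.trans hq0.symm, h2.trans hs0.symm⟩)).trans ha0
          · exact (detW ω ω0 hω h0 (h2.trans hs0.symm)).trans hw0
      have e1 : SDMM.distOf p (fun ω => ((Q ω, A ω, S ω, W ω), 𝒦 ω)) ((q, a, s, w), k)
          = SDMM.distOf p (fun ω => ((Q ω, S ω), 𝒦 ω)) ((q, s), k) :=
        SDMMAux.distOf_congr p _ _ _ _ (fun ω hω => by
          have hk := key ω hω
          simp only [Prod.mk.injEq] at hk ⊢
          tauto)
      have e2 : SDMM.distOf p (fun ω => (Q ω, A ω, S ω, W ω)) (q, a, s, w)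
          = SDMM.distOf p (fun ω => (Q ω, S ω)) (q, s) :=
        SDMMAux.distOf_congr p _ _ _ _ (fun ω hω => key ω hω)
      rw [e1, e2, hQSK q s k]
    · have z1 : SDMM.distOf p (fun ω => ((Q ω, A ω, S ω, W ω), 𝒦 ω)) ((q, a, s, w), k) = 0 :=
        SDMMAux.distOf_eq_zero p _ _ (fun ω hω hc => by
          simp only [Prod.mk.injEq] at hc
          exact hex ⟨ω, hω, hc.1.1, hc.1.2.2.1, hc.1.2.1, hc.1.2.2.2⟩)
      have z2 : SDMM.distOf p (fun ω => (Q ω, A ω, S ω, W ω)) (q, a, s, w) = 0 :=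
        SDMMAux.distOf_eq_zero p _ _ (fun ω hω hc => by
          simp only [Prod.mk.injEq] at hc
          exact hex ⟨ω, hω, hc.1, hc.2.2.1, hc.2.1, hc.2.2.2⟩)
      rw [z1, z2]
      ring
  refine ⟨SDMMAux.MI_eq_zero_of_indep p hp (fun ω => (Q ω, A ω, S ω, W ω)) 𝒦
    (fun t k => hfact t k), fun k k' t => ?_⟩
  rw [hfact t k', hfact t k]
  ring
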